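/- Let F(x) = cosh(x)/sinh²(x). There exist pairwise distinct real numbers x₁, x₂, x₃ such that Σ_{j=1}^3 Σ_{k≠j} F'(x_j - x_k) Π_{l≠j,l≠k} F(x_j - x_l) ≠ 0. In other words, F fails to satisfy the functional equation Σ_{j=1}^n ∂_j Π_{k≠j} F(x_j - x_k) = 0 for n = 3. -/

import Mathlib

/-!
`F = cosh / sinh²` is even, so `F'` is odd, and for three particles the sum collapses to the cyclic
expression `F'(u)(F(w) - F(v)) + F'(v)(F(u) - F(w)) + F'(w)(F(u) - F(v))` in the differences
`u = x₀ - x₁`, `v = x₁ - x₂`, `w = u + v`. At `u = log 2`, `v = log 3` all hyperbolic values are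
rational, and the expression equals `-187/12348`.
-/

open Finset Real

/-- The left-hand side `∑ⱼ ∂ⱼ ∏_{k≠j} F(xⱼ - x_k)` of the functional equation, with `∂ⱼ` expanded
by the product rule. -/
noncomputable def sumDerivProd (F : ℝ → ℝ) {n : ℕ} (x : Fin n → ℝ) : ℝ :=
  ∑ j, ∑ k ∈ univ.erase j, deriv F (x j - x k) * ∏ l ∈ (univ.erase j).erase k, F (x j - x l)

lemma Function.Even.deriv_neg {f : ℝ → ℝ} (hf : Function.Even f) (t : ℝ) :
    deriv f (-t) = -deriv f t := by
  have h := deriv_comp_neg (f := f) (x := -t)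
  rwa [show (fun x => f (-x)) = f from funext hf, neg_neg] at h

lemma sumDerivProd_three_of_even {f : ℝ → ℝ} (hf : Function.Even f) (x : Fin 3 → ℝ) :
    sumDerivProd f x
      = deriv f (x 0 - x 1) * (f (x 0 - x 2) - f (x 1 - x 2))
        + deriv f (x 1 - x 2) * (f (x 0 - x 1) - f (x 0 - x 2))
        + deriv f (x 0 - x 2) * (f (x 0 - x 1) - f (x 1 - x 2)) := by
  simp only [sumDerivProd, Fin.sum_univ_three, show univ.erase (0 : Fin 3) = {1, 2} by decide,
    show univ.erase (1 : Fin 3) = {0, 2} by decide, show univ.erase (2 : Fin 3) = {0, 1} by decide]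
  simp (disch := decide) only [sum_pair, erase_insert_of_ne, erase_insert_eq_erase, erase_singleton,
    erase_eq_of_notMem, insert_empty, prod_singleton]
  rw [← neg_sub (x 0) (x 1), ← neg_sub (x 0) (x 2), ← neg_sub (x 1) (x 2)]
  simp only [hf.deriv_neg, hf _]
  ring

lemma cosh_div_sinh_sq_even : Function.Even (fun t => cosh t / sinh t ^ 2) := fun t => by
  simp only [cosh_neg, sinh_neg, even_two, Even.neg_pow]

lemma deriv_cosh_div_sinh_sq {t : ℝ} (ht : t ≠ 0) :
    deriv (fun t => cosh t / sinh t ^ 2) t = -(1 + cosh t ^ 2) / sinh t ^ 3 := by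
  have hs : sinh t ≠ 0 := sinh_ne_zero.mpr ht
  have h : HasDerivAt (fun t => cosh t / sinh t ^ 2) _ t :=
    (hasDerivAt_cosh t).div ((hasDerivAt_sinh t).pow 2) (pow_ne_zero 2 hs)
  rw [h.deriv]
  field_simp
  rw [cosh_sq]
  ring

/-- `F(x) = cosh(x)/sinh²(x)` fails the functional equation
`∑ⱼ ∂ⱼ ∏_{k≠j} F(xⱼ−x_k) = 0` for `n = 3`: there is a pairwise distinct
configuration at which the expression is nonzero. -/
theorem stmt_9 :
    ∃ x : Fin 3 → ℝ, Function.Injective x ∧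
      ∑ j : Fin 3, ∑ k ∈ univ.erase j,
        deriv (fun t => Real.cosh t / Real.sinh t ^ 2) (x j - x k) *
          ∏ l ∈ (univ.erase j).erase k,
            Real.cosh (x j - x l) / Real.sinh (x j - x l) ^ 2 ≠ 0 := by
  have h2 : 0 < log 2 := log_pos (by norm_num)
  have h3 : 0 < log 3 := log_pos (by norm_num)
  have h6 : 0 < log 6 := log_pos (by norm_num)
  have hlog : log 6 - log 3 = log 2 := by
    rw [← log_div (by norm_num) (by norm_num)]; norm_num
  refine ⟨![log 6, log 3, 0], ?_, ?_⟩
  · intro i j hij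
    fin_cases i <;> fin_cases j <;> simp at hij ⊢ <;> linarith
  · change sumDerivProd (fun t => cosh t / sinh t ^ 2) ![log 6, log 3, 0] ≠ 0
    rw [sumDerivProd_three_of_even cosh_div_sinh_sq_even]
    simp only [Matrix.cons_val_zero, Matrix.cons_val_one, Matrix.cons_val_two, Matrix.head_cons,
      Matrix.tail_cons, sub_zero, hlog]
    rw [deriv_cosh_div_sinh_sq h2.ne', deriv_cosh_div_sinh_sq h3.ne', deriv_cosh_div_sinh_sq h6.ne']
    simp only [sinh_log, cosh_log, Nat.ofNat_pos]
    norm_num
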